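/- Let f : {0,1}^n → {0,1} be balanced, and let U_1,…,U_m be unitaries on C^{2^n} yielding m mutually unbiased bases. Define ρ_y = (1/(2^{n−1} m)) Σ_{b=1}^m Σ_{x ∈ f^{−1}(y)} U_b|x⟩⟨x|U_b†. Then Tr((ρ₀ − ρ₁)²) = 4/(2^n m). -/

import Mathlib

/-!
With `D` the diagonal matrix of the signs `(-1)^{f x}`, `ρ₀ - ρ₁ = (2^{n-1} m)⁻¹ Σ_b U_b D U_b†`.
By cyclicity, `Tr(U_b D U_b† U_b' D U_b'†) = Σ_{x,x'} D_x D_x' |(U_b† U_b')_{x x'}|²`. For `b = b'`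
this is `Σ_x D_x² = 2^n`; for `b ≠ b'` all the weights equal `2^{-n}`, so it is
`2^{-n} (Σ_x D_x)² = 0` because `f` is balanced. Hence the trace is `m 2^n / (2^{n-1} m)²`.
-/

open Matrix

/-- The average state `ρ_y = (1/(2^{n-1} m)) Σ_b Σ_{x ∈ f⁻¹(y)} U_b |x⟩⟨x| U_b†`
for a Boolean function `f` encoded in `m` bases. -/
noncomputable def rhoAvg (n m : ℕ)
    (U : Fin m → Matrix (Fin n → Bool) (Fin n → Bool) ℂ)
    (f : (Fin n → Bool) → Bool) (y : Bool) :
    Matrix (Fin n → Bool) (Fin n → Bool) ℂ :=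
  ((2 ^ (n - 1) * m : ℂ))⁻¹ •
    ∑ b, ∑ x ∈ Finset.univ.filter (fun x => f x = y),
      U b * Matrix.single x x 1 * (U b)ᴴ

open Finset

section Sign

variable {α R : Type*} [Ring R]

def fiberSign (f : α → Bool) (x : α) : R := if f x then -1 else 1

lemma fiberSign_mul_self (f : α → Bool) (x : α) : fiberSign f x * fiberSign f x = (1 : R) := by
  unfold fiberSign
  cases f x <;> simp

variable [Fintype α]

lemma Fintype.card_eq_two_mul_of_card_fiber_eq (f : α → Bool) {k : ℕ}
    (hf : ∀ y, #{x | f x = y} = k) : Fintype.card α = 2 * k := by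
  classical
  rw [← Finset.card_univ, Finset.card_eq_sum_card_fiberwise (t := Finset.univ) (f := f)
    (fun _ _ => Finset.mem_univ _), Fintype.sum_bool, hf, hf, two_mul]

lemma sum_fiberSign_eq_zero (f : α → Bool) (hf : #{x | f x = true} = #{x | f x = false}) :
    ∑ x, fiberSign f x = (0 : R) := by
  simp [fiberSign, Finset.sum_ite, hf]

variable [DecidableEq α]

lemma sum_filter_single_one_eq_diagonal (p : α → Prop) [DecidablePred p] :
    ∑ x with p x, single x x (1 : R) = diagonal fun x => if p x then 1 else 0 := by
  rw [← sum_single_eq_diagonal, Finset.sum_filter]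
  refine Finset.sum_congr rfl fun x _ => ?_
  split_ifs <;> simp

lemma sum_single_fiber_false_sub_sum_single_fiber_true (f : α → Bool) :
    ∑ x with f x = false, single x x (1 : R) - ∑ x with f x = true, single x x 1
      = diagonal (fiberSign f) := by
  rw [sum_filter_single_one_eq_diagonal, sum_filter_single_one_eq_diagonal, diagonal_sub]
  congr 1
  funext x
  unfold fiberSign
  cases f x <;> simp

end Sign

section Trace

variable {α R : Type*} [Fintype α]

lemma trace_mul_conjTranspose_mul_mul_conjTranspose [CommSemiring R] [StarRing R]
    (A B D : Matrix α α R) :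
    (A * D * Aᴴ * (B * D * Bᴴ)).trace = (D * (Aᴴ * B) * D * (Aᴴ * B)ᴴ).trace := by
  simp only [conjTranspose_mul, conjTranspose_conjTranspose, Matrix.mul_assoc]
  rw [trace_mul_comm A]
  simp only [Matrix.mul_assoc]

variable [DecidableEq α]

lemma trace_diagonal_mul_mul_diagonal_mul_conjTranspose [CommSemiring R] [StarRing R]
    (d : α → R) (V : Matrix α α R) :
    (diagonal d * V * diagonal d * Vᴴ).trace
      = ∑ i, ∑ j, d i * d j * (V i j * star (V i j)) := by
  refine Finset.sum_congr rfl fun i _ => Finset.sum_congr rfl fun j _ => ?_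
  simp only [mul_diagonal, diagonal_mul, conjTranspose_apply]
  ring

lemma trace_conj_diagonal_mul_self [CommSemiring R] [StarRing R] (d : α → R)
    (hd : ∀ i, d i * d i = 1) (A : Matrix α α R) (hA : Aᴴ * A = 1) :
    (A * diagonal d * Aᴴ * (A * diagonal d * Aᴴ)).trace = Fintype.card α := by
  rw [trace_mul_conjTranspose_mul_mul_conjTranspose, hA, conjTranspose_one]
  simp [hd]

variable {𝕜 : Type*} [RCLike 𝕜]

lemma trace_conj_diagonal_mul_conj_diagonal_eq_zero (d : α → 𝕜) (hd : ∑ i, d i = 0)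
    (A B : Matrix α α 𝕜) (κ : ℝ) (hAB : ∀ i j, ‖(Aᴴ * B) i j‖ ^ 2 = κ) :
    (A * diagonal d * Aᴴ * (B * diagonal d * Bᴴ)).trace = 0 := by
  rw [trace_mul_conjTranspose_mul_mul_conjTranspose,
    trace_diagonal_mul_mul_diagonal_mul_conjTranspose]
  simp only [RCLike.star_def, RCLike.mul_conj, ← RCLike.ofReal_pow, hAB]
  simp [← Finset.sum_mul, ← Finset.mul_sum, hd]

lemma trace_sum_conj_diagonal_mul_self {ι : Type*} [Fintype ι] [DecidableEq ι]
    (U : ι → Matrix α α 𝕜) (d : α → 𝕜) (hd_sq : ∀ i, d i * d i = 1) (hd_sum : ∑ i, d i = 0)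
    (hU : ∀ b, (U b)ᴴ * U b = 1) (κ : ℝ)
    (hmub : ∀ b b', b ≠ b' → ∀ i j, ‖((U b)ᴴ * U b') i j‖ ^ 2 = κ) :
    ((∑ b, U b * diagonal d * (U b)ᴴ) * (∑ b, U b * diagonal d * (U b)ᴴ)).trace
      = Fintype.card ι * Fintype.card α := by
  have h_off : ∀ b b', b' ≠ b →
      (U b * diagonal d * (U b)ᴴ * (U b' * diagonal d * (U b')ᴴ)).trace = 0 :=
    fun b b' hb' =>
      trace_conj_diagonal_mul_conj_diagonal_eq_zero d hd_sum _ _ κ (hmub b b' hb'.symm)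
  simp only [Finset.sum_mul_sum, trace_sum]
  calc ∑ b, ∑ b', (U b * diagonal d * (U b)ᴴ * (U b' * diagonal d * (U b')ᴴ)).trace
      = ∑ _b : ι, (Fintype.card α : 𝕜) := Finset.sum_congr rfl fun b _ => by
        rw [Finset.sum_eq_single b (fun b' _ => h_off b b') (by simp),
          trace_conj_diagonal_mul_self d hd_sq _ (hU b)]
    _ = Fintype.card ι * Fintype.card α := by simp

end Trace

lemma rhoAvg_false_sub_rhoAvg_true (n m : ℕ)
    (U : Fin m → Matrix (Fin n → Bool) (Fin n → Bool) ℂ) (f : (Fin n → Bool) → Bool) :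
    rhoAvg n m U f false - rhoAvg n m U f true
      = (2 ^ (n - 1) * m : ℂ)⁻¹ • ∑ b, U b * diagonal (fiberSign f) * (U b)ᴴ := by
  rw [rhoAvg, rhoAvg, ← smul_sub, ← Finset.sum_sub_distrib]
  simp only [← sum_single_fiber_false_sub_sum_single_fiber_true, Matrix.mul_sub, Matrix.sub_mul,
    Finset.mul_sum, Finset.sum_mul]

theorem trace_sq_diff_balanced_mubs_general
    {n m : ℕ}
    (f : (Fin n → Bool) → Bool)
    (hf : ∀ y, (Finset.univ.filter (fun x => f x = y)).card = 2 ^ (n - 1))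
    (U : Fin m → Matrix (Fin n → Bool) (Fin n → Bool) ℂ)
    (hU : ∀ b, (U b)ᴴ * U b = 1 ∧ U b * (U b)ᴴ = 1)
    (hmub : ∀ b b', b ≠ b' → ∀ x x',
      ‖((U b)ᴴ * U b') x x'‖ ^ 2 = ((2 : ℝ) ^ n)⁻¹) :
    ((rhoAvg n m U f false - rhoAvg n m U f true)
      * (rhoAvg n m U f false - rhoAvg n m U f true)).trace
      = 4 / (2 ^ n * m) := by
  have hcard : 2 ^ n = 2 * 2 ^ (n - 1) := by
    simpa using Fintype.card_eq_two_mul_of_card_fiber_eq f hf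
  rw [rhoAvg_false_sub_rhoAvg_true, smul_mul_smul_comm, trace_smul,
    trace_sum_conj_diagonal_mul_self U _ (fiberSign_mul_self f)
      (sum_fiberSign_eq_zero f ((hf true).trans (hf false).symm)) (fun b => (hU b).1) _ hmub]
  simp only [Fintype.card_fin, Fintype.card_fun, Fintype.card_bool, smul_eq_mul, Nat.cast_pow,
    Nat.cast_ofNat]
  rw [show (2 : ℂ) ^ n = 2 * 2 ^ (n - 1) by exact_mod_cast hcard]
  -- for `m = 0` both sides are `0`, since `0⁻¹ = 0` and `x / 0 = 0`
  rcases eq_or_ne (m : ℂ) 0 with hm | hm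
  · simp [hm]
  · field_simp
    ring

/-- For a balanced Boolean function `f` on `n`-bit strings encoded in `m`
mutually unbiased bases, `Tr((ρ₀ − ρ₁)²) = 4/(2^n m)`. -/
theorem trace_sq_diff_balanced_mubs
    {n m : ℕ} (hn : 1 ≤ n) (hm : 1 ≤ m)
    (f : (Fin n → Bool) → Bool)
    (hf : ∀ y, (Finset.univ.filter (fun x => f x = y)).card = 2 ^ (n - 1))
    (U : Fin m → Matrix (Fin n → Bool) (Fin n → Bool) ℂ)
    (hU : ∀ b, (U b)ᴴ * U b = 1 ∧ U b * (U b)ᴴ = 1)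
    (hmub : ∀ b b', b ≠ b' → ∀ x x',
      ‖((U b)ᴴ * U b') x x'‖ ^ 2 = ((2 : ℝ) ^ n)⁻¹) :
    ((rhoAvg n m U f false - rhoAvg n m U f true)
      * (rhoAvg n m U f false - rhoAvg n m U f true)).trace
      = 4 / (2 ^ n * m) :=
  trace_sq_diff_balanced_mubs_general f hf U hU hmub
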